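/- Let 2/3 < p ≤ 1, define g as above, and let q1, q2 ∈ [0,1] with (q1+q2)/2 ≥ p. Then for all real numbers a and b, ((b-a)^2/2) g(q1) + ((b+a)^2/2) g(q2) - b^2 g((q1+q2)/2) ≥ ((q1+q2)/2) a^2. -/

import Mathlib

/-!
With `K = p(2-p)/(3p-2) ≥ 0` and `s = 3p - 2q` we have `gt' p q = 1 + K/s`, and the mean
`m = (q₁+q₂)/2` has `3p - 2m = (s₁+s₂)/2`. So for `gt'` the inequality reads
`m a² ≤ a² + (K/2)((b-a)²/s₁ + (b+a)²/s₂ - (2b)²/(s₁+s₂))`, which is Sedrakyan's form of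
Cauchy–Schwarz together with `m ≤ 1`. It transfers to `g`: `g = gt'` at `m ≥ p`, and on
`[2p-1, p]` the chord `g` lies above `gt'` since `q·gt'(p) - p·gt'(q)` is a positive multiple of
`(p - q)(q - (2p-1))`; each `qᵢ ≥ 2m - 1 ≥ 2p - 1`.
-/

/-- `gt' p q = 1 + p(2-p)/((3p-2)(3p-2q))` -/
noncomputable def gt' (p q : ℝ) : ℝ := 1 + p * (2 - p) / ((3 * p - 2) * (3 * p - 2 * q))

/-- `g p q` equals `gt' p q` for `q ≥ p` and is linear, `g(p)·q/p`, for `q ≤ p`. -/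
noncomputable def g (p q : ℝ) : ℝ := if q ≤ p then gt' p p * q / p else gt' p q

lemma sq_add_div_add_le {x y s₁ s₂ : ℝ} (hs₁ : 0 < s₁) (hs₂ : 0 < s₂) :
    (x + y) ^ 2 / (s₁ + s₂) ≤ x ^ 2 / s₁ + y ^ 2 / s₂ := by
  simpa using Finset.sq_sum_div_le_sum_sq_div Finset.univ ![x, y] (g := ![s₁, s₂])
    (by simp [Fin.forall_fin_two, hs₁, hs₂])

lemma gt'_eq_one_add_div (p q : ℝ) :
    gt' p q = 1 + p * (2 - p) / (3 * p - 2) / (3 * p - 2 * q) := by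
  rw [gt', div_div]

lemma le_one_add_div_two_point {K s₁ s₂ m : ℝ} (hK : 0 ≤ K) (hs₁ : 0 < s₁) (hs₂ : 0 < s₂)
    (hm : m ≤ 1) (a b : ℝ) :
    m * a ^ 2 ≤ (b - a) ^ 2 / 2 * (1 + K / s₁) + (b + a) ^ 2 / 2 * (1 + K / s₂)
      - b ^ 2 * (1 + K / ((s₁ + s₂) / 2)) := by
  have hCS := sq_add_div_add_le (x := b - a) (y := b + a) hs₁ hs₂
  have hexpand : (b - a) ^ 2 / 2 * (1 + K / s₁) + (b + a) ^ 2 / 2 * (1 + K / s₂)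
      - b ^ 2 * (1 + K / ((s₁ + s₂) / 2)) =
        a ^ 2 + K / 2 * ((b - a) ^ 2 / s₁ + (b + a) ^ 2 / s₂ - (b - a + (b + a)) ^ 2 / (s₁ + s₂)) := by
    rw [div_div_eq_mul_div]
    ring
  rw [hexpand]
  have := mul_nonneg hK (sub_nonneg.mpr hCS)
  nlinarith [sq_nonneg a]

lemma le_gt'_two_point {p q₁ q₂ : ℝ} (hp : 2 / 3 < p) (hp₂ : p ≤ 2)
    (hq₁ : q₁ < 3 * p / 2) (hq₂ : q₂ < 3 * p / 2) (hm : (q₁ + q₂) / 2 ≤ 1) (a b : ℝ) :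
    (q₁ + q₂) / 2 * a ^ 2 ≤
      (b - a) ^ 2 / 2 * gt' p q₁ + (b + a) ^ 2 / 2 * gt' p q₂ - b ^ 2 * gt' p ((q₁ + q₂) / 2) := by
  have hK : 0 ≤ p * (2 - p) / (3 * p - 2) :=
    div_nonneg (mul_nonneg (by linarith) (by linarith)) (by linarith)
  have hmean : 3 * p - 2 * ((q₁ + q₂) / 2) = ((3 * p - 2 * q₁) + (3 * p - 2 * q₂)) / 2 := by ring
  simp only [gt'_eq_one_add_div, hmean]
  exact le_one_add_div_two_point hK (by linarith) (by linarith) hm a b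

lemma g_eq_gt'_of_le {p q : ℝ} (hp : p ≠ 0) (hpq : p ≤ q) : g p q = gt' p q := by
  unfold g
  split_ifs with hqp
  · obtain rfl : q = p := le_antisymm hqp hpq
    field_simp
  · rfl

lemma gt'_le_g {p q : ℝ} (hp : 2 / 3 < p) (hq : 2 * p - 1 ≤ q) : gt' p q ≤ g p q := by
  unfold g
  split_ifs with hqp
  · have hp₀ : 0 < p := by linarith
    have ht : 0 < 3 * p - 2 := by linarith
    have hs : 0 < 3 * p - 2 * q := by linarith
    have hgap : gt' p p * q - gt' p q * p =
        4 * p * ((p - q) * (q - (2 * p - 1))) / ((3 * p - 2) * (3 * p - 2 * q)) := by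
      have hpp : 3 * p - 2 * p = p := by ring
      rw [gt', gt', hpp]
      -- `field_simp` would otherwise normalise `3 * p - 2` and miss the side conditions `ht`, `hs`
      set t := 3 * p - 2 with ht_def
      set s := 3 * p - 2 * q with hs_def
      field_simp [ht.ne', hs.ne']
      rw [ht_def, hs_def]
      ring
    rw [le_div_iff₀ hp₀, ← sub_nonneg, hgap]
    have := mul_nonneg (sub_nonneg.mpr hqp) (sub_nonneg.mpr hq)
    positivity
  · rfl

theorem stmt_8_general (p : ℝ) (hp1 : 2 / 3 < p)
    (q1 q2 : ℝ) (hq1 : q1 ∈ Set.Icc (0:ℝ) 1) (hq2 : q2 ∈ Set.Icc (0:ℝ) 1)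
    (hmean : (q1 + q2) / 2 ≥ p) (a b : ℝ) :
    (b - a)^2 / 2 * g p q1 + (b + a)^2 / 2 * g p q2 - b^2 * g p ((q1 + q2) / 2)
      ≥ (q1 + q2) / 2 * a^2 := by
  obtain ⟨-, hq1⟩ := hq1
  obtain ⟨-, hq2⟩ := hq2
  have key := le_gt'_two_point (q₁ := q1) (q₂ := q2) hp1 (by linarith) (by linarith)
    (by linarith) (by linarith) a b
  have h₁ := mul_le_mul_of_nonneg_left (gt'_le_g (q := q1) hp1 (by linarith))
    (by positivity : 0 ≤ (b - a) ^ 2 / 2)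
  have h₂ := mul_le_mul_of_nonneg_left (gt'_le_g (q := q2) hp1 (by linarith))
    (by positivity : 0 ≤ (b + a) ^ 2 / 2)
  rw [g_eq_gt'_of_le (by linarith : 0 < p).ne' hmean]
  linarith

theorem stmt_8 (p : ℝ) (hp1 : 2 / 3 < p) (hp2 : p ≤ 1)
    (q1 q2 : ℝ) (hq1 : q1 ∈ Set.Icc (0:ℝ) 1) (hq2 : q2 ∈ Set.Icc (0:ℝ) 1)
    (hmean : (q1 + q2) / 2 ≥ p) (a b : ℝ) :
    (b - a)^2 / 2 * g p q1 + (b + a)^2 / 2 * g p q2 - b^2 * g p ((q1 + q2) / 2)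
      ≥ (q1 + q2) / 2 * a^2 :=
  stmt_8_general p hp1 q1 q2 hq1 hq2 hmean a b
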